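/- In an idempotent residuated chain, if b is a negative element with b < b^{⋆⋆} (where x^⋆ = x^ℓ ∧ x^r), then every element c with b < c ≤ b^{⋆⋆} is central (commutes with every element). -/

import Mathlib

/-!
Idempotent residuated chains are conservative: `x * y = min x y` when `x * y ≤ 1` and
`x * y = max x y` otherwise. Since `c * y ≤ 1 ↔ y ≤ c^r` and `y * c ≤ 1 ↔ y ≤ c^ℓ`, every `c`
with `c^ℓ = c^r` is central.

For `b < c ≤ b^{⋆⋆} ≤ 1` we have `b^⋆ ≤ b^{⋆⋆⋆} ≤ c^⋆`. If `c^ℓ < f = c^r`, then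
`c * f = c`, and `f * b < 1` would put `f` below `b^⋆ ≤ c^ℓ`, so `f * b = f`; hence
`b = c * b = c * f * b = c * f = c`, a contradiction. The case `c^r < c^ℓ` is symmetric.
-/

/-- `x^⋆ = x^ℓ ∧ x^r` in a residuated lattice with divisions `ld`, `rd`. -/
def lstar {A : Type*} [Lattice A] [One A] (ld rd : A → A → A) (x : A) : A :=
  rd 1 x ⊓ ld x 1

section Residuated

variable {A : Type*}

theorem mulLeftMono_of_residuated [Preorder A] [Mul A] {ld : A → A → A}
    (resl : ∀ x y z : A, x * y ≤ z ↔ y ≤ ld x z) : MulLeftMono A :=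
  ⟨fun x _ b h => (resl x _ (x * b)).2 (h.trans ((resl x b _).1 le_rfl))⟩

theorem mulRightMono_of_residuated [Preorder A] [Mul A] {rd : A → A → A}
    (resr : ∀ x y z : A, x * y ≤ z ↔ x ≤ rd z y) : MulRightMono A :=
  ⟨fun y _ b h => (resr _ y (b * y)).2 (h.trans ((resr b y _).1 le_rfl))⟩

variable [Lattice A] [Monoid A] {ld rd : A → A → A}

theorem le_lstar_lstar (resl : ∀ x y z : A, x * y ≤ z ↔ y ≤ ld x z)
    (resr : ∀ x y z : A, x * y ≤ z ↔ x ≤ rd z y) (x : A) :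
    x ≤ lstar ld rd (lstar ld rd x) :=
  le_inf ((resr _ _ _).1 ((resl _ _ _).2 inf_le_right))
    ((resl _ _ _).1 ((resr _ _ _).2 inf_le_left))

theorem lstar_antitone [MulLeftMono A] [MulRightMono A]
    (resl : ∀ x y z : A, x * y ≤ z ↔ y ≤ ld x z)
    (resr : ∀ x y z : A, x * y ≤ z ↔ x ≤ rd z y) : Antitone (lstar ld rd) := fun _ y h =>
  le_inf ((resr _ _ _).1 ((mul_le_mul_right h _).trans ((resr _ y _).2 inf_le_left)))
    ((resl _ _ _).1 ((mul_le_mul_left h _).trans ((resl y _ _).2 inf_le_right)))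

theorem one_le_rd_one (resr : ∀ x y z : A, x * y ≤ z ↔ x ≤ rd z y) {x : A} (hx : x ≤ 1) :
    1 ≤ rd 1 x :=
  (resr 1 x 1).1 (by rwa [one_mul])

theorem one_le_ld_one (resl : ∀ x y z : A, x * y ≤ z ↔ y ≤ ld x z) {x : A} (hx : x ≤ 1) :
    1 ≤ ld x 1 :=
  (resl x 1 1).1 (by rwa [mul_one])

theorem lstar_lstar_le_one [MulLeftMono A] (resl : ∀ x y z : A, x * y ≤ z ↔ y ≤ ld x z)
    (resr : ∀ x y z : A, x * y ≤ z ↔ x ≤ rd z y) {x : A} (hx : x ≤ 1) :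
    lstar ld rd (lstar ld rd x) ≤ 1 :=
  have hx' : 1 ≤ lstar ld rd x := le_inf (one_le_rd_one resr hx) (one_le_ld_one resl hx)
  inf_le_left.trans (le_of_mul_le_of_one_le_left ((resr _ _ _).2 le_rfl) hx')

end Residuated

section IdempotentChain

variable {A : Type*} [LinearOrder A] [Monoid A] [MulLeftMono A] [MulRightMono A]

theorem mul_eq_min_of_mul_le_one (idem : ∀ x : A, x * x = x) {x y : A} (h : x * y ≤ 1) :
    x * y = min x y := by
  refine le_antisymm (le_min ?_ ?_) ?_
  · calc x * y = x * (x * y) := by rw [← mul_assoc, idem]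
      _ ≤ x := mul_le_of_le_one_right' h
  · calc x * y = x * y * y := by rw [mul_assoc, idem]
      _ ≤ y := mul_le_of_le_one_left' h
  · calc min x y = min x y * min x y := (idem _).symm
      _ ≤ x * y := mul_le_mul' (min_le_left x y) (min_le_right x y)

theorem mul_eq_max_of_one_le_mul (idem : ∀ x : A, x * x = x) {x y : A} (h : 1 ≤ x * y) :
    x * y = max x y := by
  refine le_antisymm ?_ (max_le ?_ ?_)
  · calc x * y ≤ max x y * max x y := mul_le_mul' (le_max_left x y) (le_max_right x y)
      _ = max x y := idem _
  · calc x ≤ x * (x * y) := le_mul_of_one_le_right' h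
      _ = x * y := by rw [← mul_assoc, idem]
  · calc y ≤ x * y * y := le_mul_of_one_le_left' h
      _ = x * y := by rw [mul_assoc, idem]

variable {ld rd : A → A → A}

theorem mul_comm_of_rd_one_eq_ld_one (resl : ∀ x y z : A, x * y ≤ z ↔ y ≤ ld x z)
    (resr : ∀ x y z : A, x * y ≤ z ↔ x ≤ rd z y) (idem : ∀ x : A, x * x = x) {c : A}
    (hc : rd 1 c = ld c 1) (y : A) : c * y = y * c := by
  have hsides : y * c ≤ 1 ↔ c * y ≤ 1 := by rw [resr, resl, hc]
  rcases le_or_gt (c * y) 1 with h | h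
  · rw [mul_eq_min_of_mul_le_one idem h, mul_eq_min_of_mul_le_one idem (hsides.2 h), min_comm]
  · have h' : 1 < y * c := lt_of_not_ge (hsides.not.2 h.not_ge)
    rw [mul_eq_max_of_one_le_mul idem h.le, mul_eq_max_of_one_le_mul idem h'.le, max_comm]

theorem ld_one_le_rd_one (resl : ∀ x y z : A, x * y ≤ z ↔ y ≤ ld x z)
    (resr : ∀ x y z : A, x * y ≤ z ↔ x ≤ rd z y) (idem : ∀ x : A, x * x = x) {b c : A}
    (hbc : b < c) (hc : c ≤ 1) (hstar : lstar ld rd b ≤ lstar ld rd c) : ld c 1 ≤ rd 1 c := by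
  by_contra! hlt
  set f := ld c 1
  have hf : 1 < f := (one_le_rd_one resr hc).trans_lt hlt
  have hcf : c * f = c :=
    (mul_eq_min_of_mul_le_one idem ((resl _ _ _).2 le_rfl)).trans (min_eq_left (hc.trans hf.le))
  have hfb : f * b = f := by
    refine (mul_eq_max_of_one_le_mul idem ?_).trans (max_eq_left ((hbc.le.trans hc).trans hf.le))
    by_contra! hfb
    have hf_le : f ≤ lstar ld rd b :=
      le_inf ((resr _ _ _).1 hfb.le)
        ((resl _ _ _).1 ((mul_le_mul_left hbc.le f).trans (hcf.trans_le hc)))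
    exact (hf_le.trans (hstar.trans inf_le_left)).not_gt hlt
  have hcb : c * b = b :=
    (mul_eq_min_of_mul_le_one idem (mul_le_one' hc (hbc.le.trans hc))).trans (min_eq_right hbc.le)
  refine hbc.ne ?_
  calc b = c * f * b := by rw [hcf, hcb]
    _ = c := by rw [mul_assoc, hfb, hcf]

theorem rd_one_le_ld_one (resl : ∀ x y z : A, x * y ≤ z ↔ y ≤ ld x z)
    (resr : ∀ x y z : A, x * y ≤ z ↔ x ≤ rd z y) (idem : ∀ x : A, x * x = x) {b c : A}
    (hbc : b < c) (hc : c ≤ 1) (hstar : lstar ld rd b ≤ lstar ld rd c) : rd 1 c ≤ ld c 1 := by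
  by_contra! hlt
  set e := rd 1 c
  have he : 1 < e := (one_le_ld_one resl hc).trans_lt hlt
  have hec : e * c = c :=
    (mul_eq_min_of_mul_le_one idem ((resr _ _ _).2 le_rfl)).trans (min_eq_right (hc.trans he.le))
  have hbe : b * e = e := by
    refine (mul_eq_max_of_one_le_mul idem ?_).trans (max_eq_right ((hbc.le.trans hc).trans he.le))
    by_contra! hbe
    have he_le : e ≤ lstar ld rd b :=
      le_inf ((resr _ _ _).1 ((mul_le_mul_right hbc.le e).trans (hec.trans_le hc)))
        ((resl _ _ _).1 hbe.le)
    exact (he_le.trans (hstar.trans inf_le_right)).not_gt hlt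
  have hbc' : b * c = b :=
    (mul_eq_min_of_mul_le_one idem (mul_le_one' (hbc.le.trans hc) hc)).trans (min_eq_left hbc.le)
  refine hbc.ne ?_
  calc b = b * (e * c) := by rw [hec, hbc']
    _ = c := by rw [← mul_assoc, hbe, hec]

end IdempotentChain

/-- In an idempotent residuated chain, if `b` is negative and `b < b^{⋆⋆}`, then
every `c` with `b < c ≤ b^{⋆⋆}` is central. -/
theorem stmt15 {A : Type*} [LinearOrder A] [Monoid A]
    (ld rd : A → A → A)
    (resl : ∀ x y z : A, x * y ≤ z ↔ y ≤ ld x z)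
    (resr : ∀ x y z : A, x * y ≤ z ↔ x ≤ rd z y)
    (idem : ∀ x : A, x * x = x) :
    ∀ b : A, b ≤ 1 → b < lstar ld rd (lstar ld rd b) →
      ∀ c : A, b < c → c ≤ lstar ld rd (lstar ld rd b) →
        ∀ y : A, c * y = y * c := by
  intro b hb _ c hbc hcle y
  have := mulLeftMono_of_residuated resl
  have := mulRightMono_of_residuated resr
  have hc : c ≤ 1 := hcle.trans (lstar_lstar_le_one resl resr hb)
  have hstar : lstar ld rd b ≤ lstar ld rd c :=
    (le_lstar_lstar resl resr _).trans (lstar_antitone resl resr hcle)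
  have hlr : rd 1 c = ld c 1 :=
    le_antisymm (rd_one_le_ld_one resl resr idem hbc hc hstar)
      (ld_one_le_rd_one resl resr idem hbc hc hstar)
  exact mul_comm_of_rd_one_eq_ld_one resl resr idem hlr y
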